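/- arXiv:math/0312376 — 4 statements merged into one kernel-verified Lean document; each statement's English description precedes it below -/
import Mathlib

section
/- For every real t ≥ 0, the operator norm of exp(tA) is at most 1; i.e., the semigroup generated by the phase-space matrix A of the damped system is contractive. -/
open Matrix
open scoped ComplexOrder

noncomputable section

/-- The value `x* P x` (which is real for Hermitian `P`), taken as its real part. -/
def qf {n : ℕ} (P : Matrix (Fin n) (Fin n) ℂ) (x : Fin n → ℂ) : ℝ :=
  (star x ⬝ᵥ P.mulVec x).re

/-- The (positive semidefinite) square root of a positive semidefinite matrix,
extended by `0` to all matrices. -/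
def msqrt {n : ℕ} (P : Matrix (Fin n) (Fin n) ℂ) : Matrix (Fin n) (Fin n) ℂ :=
  open scoped Classical in
  if h : P.PosSemidef then
    (h.1.eigenvectorUnitary.1 * diagonal (((↑) : ℝ → ℂ) ∘ Real.sqrt ∘ h.1.eigenvalues) *
      (star h.1.eigenvectorUnitary : Matrix (Fin n) (Fin n) ℂ)) else 0

/-- The phase-space matrix `A = [[0, K½ M⁻½], [−M⁻½ K½, −M⁻½ C M⁻½]]`. -/
def phaseA {n : ℕ} (M C K : Matrix (Fin n) (Fin n) ℂ) :
    Matrix (Fin n ⊕ Fin n) (Fin n ⊕ Fin n) ℂ :=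
  fromBlocks 0 (msqrt K * (msqrt M)⁻¹)
    (-((msqrt M)⁻¹ * msqrt K)) (-((msqrt M)⁻¹ * C * (msqrt M)⁻¹))

/-- The operator norm of a matrix with respect to the Euclidean norm. -/
def opNorm {m : Type*} [Fintype m] [DecidableEq m] (A : Matrix m m ℂ) : ℝ :=
  ‖toEuclideanCLM (𝕜 := ℂ) A‖

/-!
`A` is dissipative: the square roots are Hermitian, so the off-diagonal blocks `K½M⁻½` and
`-M⁻½K½` are negative adjoints of each other and `Re z* A z = -v* (M⁻½ C M⁻½) v ≤ 0` for
`z = (u, v)`. Along a trajectory `y s = exp (s A) x` the derivative of `‖y s‖²` is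
`2 Re ⟪A y, y⟫ ≤ 0`, so the norm never increases.
-/

open NormedSpace in
theorem norm_exp_smul_apply_le_of_re_inner_nonpos {E : Type*} [NormedAddCommGroup E]
    [InnerProductSpace ℂ E] [CompleteSpace E] {L : E →L[ℂ] E}
    (hL : ∀ z, (inner ℂ (L z) z).re ≤ 0) {t : ℝ} (ht : 0 ≤ t) (x : E) :
    ‖exp (t • L) x‖ ≤ ‖x‖ := by
  let _ : InnerProductSpace ℝ E := .rclikeToReal ℂ E
  set y : ℝ → E := fun s ↦ exp (s • L) x
  have hy (s : ℝ) : HasDerivAt y (L (y s)) s :=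
    ((ContinuousLinearMap.apply ℂ E x).restrictScalars ℝ).hasFDerivAt.comp_hasDerivAt s
      (hasDerivAt_exp_smul_const' L s)
  have hanti : Antitone (‖y ·‖ ^ 2) :=
    antitone_of_hasDerivAt_nonpos (fun s ↦ (hy s).norm_sq) fun s ↦ by
      have := hL (y s)
      rw [Pi.zero_apply, real_inner_eq_re_inner ℂ, inner_re_symm, RCLike.re_to_complex]
      linarith
  have h := hanti ht
  simp only [y, zero_smul, exp_zero, one_apply_eq_self] at h
  exact (pow_le_pow_iff_left₀ (norm_nonneg _) (norm_nonneg _) two_ne_zero).mp h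

open NormedSpace in
theorem norm_exp_smul_le_one_of_re_inner_nonpos {E : Type*} [NormedAddCommGroup E]
    [InnerProductSpace ℂ E] [CompleteSpace E] {L : E →L[ℂ] E}
    (hL : ∀ z, (inner ℂ (L z) z).re ≤ 0) {t : ℝ} (ht : 0 ≤ t) :
    ‖exp (t • L)‖ ≤ 1 :=
  ContinuousLinearMap.opNorm_le_bound _ zero_le_one fun x ↦ by
    simpa using norm_exp_smul_apply_le_of_re_inner_nonpos hL ht x

theorem Matrix.toEuclideanCLM_exp {𝕜 m : Type*} [RCLike 𝕜] [Fintype m] [DecidableEq m]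
    (A : Matrix m m 𝕜) :
    toEuclideanCLM (𝕜 := 𝕜) (NormedSpace.exp A) =
      NormedSpace.exp (toEuclideanCLM (𝕜 := 𝕜) A) := by
  set e := toEuclideanCLM (𝕜 := 𝕜) (n := m)
  -- Any norm will do: `NormedSpace.exp` on matrices only depends on their topology.
  let _ := Matrix.linftyOpNormedRing (n := m) (α := 𝕜)
  let _ := Matrix.linftyOpNormedAlgebra (n := m) (α := 𝕜) (R := 𝕜)
  have h := NormedSpace.map_exp_of_mem_ball (𝕂 := 𝕜) e.symm
    (LinearMap.continuous_of_finiteDimensional e.symm.toAlgEquiv.toLinearMap)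
    (e A) (by simp [NormedSpace.expSeries_radius_eq_top])
  rw [StarAlgEquiv.symm_apply_apply] at h
  rw [← StarAlgEquiv.apply_symm_apply e (NormedSpace.exp (e A))]
  exact congrArg e h.symm

theorem opNorm_exp_smul_le_one_of_re_star_dotProduct_mulVec_nonpos {m : Type*} [Fintype m]
    [DecidableEq m] {A : Matrix m m ℂ} (hA : ∀ z, (star z ⬝ᵥ A *ᵥ z).re ≤ 0) {t : ℝ}
    (ht : 0 ≤ t) : opNorm (NormedSpace.exp ((t : ℂ) • A)) ≤ 1 := by
  rw [opNorm, toEuclideanCLM_exp, map_smul]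
  -- the complex scalar `(t : ℂ)` acts definitionally as the real scalar `t`
  refine norm_exp_smul_le_one_of_re_inner_nonpos (fun z ↦ ?_) ht
  rw [← RCLike.re_to_complex, ← inner_re_symm, EuclideanSpace.inner_eq_star_dotProduct,
    ofLp_toEuclideanCLM, dotProduct_comm, RCLike.re_to_complex]
  exact hA z.ofLp

theorem Matrix.re_star_dotProduct_fromBlocks_mulVec_nonpos {𝕜 m n : Type*} [RCLike 𝕜]
    [Fintype m] [Fintype n] (B : Matrix m n 𝕜) {D : Matrix n n 𝕜} (hD : D.PosSemidef)
    (z : m ⊕ n → 𝕜) :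
    RCLike.re (star z ⬝ᵥ fromBlocks 0 B (-Bᴴ) (-D) *ᵥ z) ≤ 0 := by
  obtain ⟨u, v, rfl⟩ : ∃ u v, z = Sum.elim u v := ⟨z ∘ Sum.inl, z ∘ Sum.inr, by simp⟩
  have hadj : star v ⬝ᵥ Bᴴ *ᵥ u = star (star u ⬝ᵥ B *ᵥ v) := by
    rw [star_dotProduct, star_mulVec, conjTranspose_conjTranspose, dotProduct_mulVec]
  have hexpand : star (Sum.elim u v) ⬝ᵥ fromBlocks 0 B (-Bᴴ) (-D) *ᵥ Sum.elim u v
      = star u ⬝ᵥ B *ᵥ v - star (star u ⬝ᵥ B *ᵥ v) - star v ⬝ᵥ D *ᵥ v := by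
    rw [Function.star_sumElim, fromBlocks_mulVec, sumElim_dotProduct_sumElim, ← hadj]
    simp only [Sum.elim_comp_inl, Sum.elim_comp_inr, zero_mulVec, zero_add, neg_mulVec,
      dotProduct_add, dotProduct_neg]
    ring
  rw [hexpand, map_sub, map_sub, RCLike.star_def, RCLike.conj_re, sub_self, zero_sub,
    neg_nonpos]
  exact hD.re_dotProduct_nonneg v

theorem msqrt_isHermitian {n : ℕ} (P : Matrix (Fin n) (Fin n) ℂ) : (msqrt P).IsHermitian := by
  unfold msqrt
  split_ifs
  · exact isHermitian_mul_mul_conjTranspose _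
      (isHermitian_diagonal_of_self_adjoint _ (funext fun i ↦ by simp))
  · exact isHermitian_zero

theorem phaseA_eq_fromBlocks {n : ℕ} (M C K : Matrix (Fin n) (Fin n) ℂ) :
    phaseA M C K = fromBlocks 0 (msqrt K * (msqrt M)⁻¹) (-(msqrt K * (msqrt M)⁻¹)ᴴ)
      (-((msqrt M)⁻¹ * C * (msqrt M)⁻¹)) := by
  rw [phaseA, conjTranspose_mul, (msqrt_isHermitian K).eq, (msqrt_isHermitian M).inv.eq]

theorem contractive_semigroup_general {n : ℕ}
    (M C K : Matrix (Fin n) (Fin n) ℂ)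
    (hC : C.PosDef) :
    ∀ t : ℝ, 0 ≤ t →
      opNorm (NormedSpace.exp ((t : ℂ) • phaseA M C K)) ≤ 1 := by
  intro t ht
  have hD : ((msqrt M)⁻¹ * C * (msqrt M)⁻¹).PosSemidef := by
    simpa only [(msqrt_isHermitian M).inv.eq] using
      hC.posSemidef.conjTranspose_mul_mul_same (msqrt M)⁻¹
  refine opNorm_exp_smul_le_one_of_re_star_dotProduct_mulVec_nonpos (fun z ↦ ?_) ht
  rw [phaseA_eq_fromBlocks, ← RCLike.re_to_complex]
  exact re_star_dotProduct_fromBlocks_mulVec_nonpos _ hD z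

/-- The semigroup generated by the phase-space matrix `A` is contractive:
`‖exp (t A)‖ ≤ 1` for all `t ≥ 0`. -/
theorem contractive_semigroup {n : ℕ} (hn : 1 ≤ n)
    (M C K : Matrix (Fin n) (Fin n) ℂ)
    (hM : M.PosDef) (hC : C.PosDef) (hK : K.PosDef) :
    ∀ t : ℝ, 0 ≤ t →
      opNorm (NormedSpace.exp ((t : ℂ) • phaseA M C K)) ≤ 1 :=
  contractive_semigroup_general M C K hC

end
end

section
/- Let H be a complex Hilbert space and let A, B be bounded linear operators on H. Then the operator norm of the block operator L = [[A, 0], [B, I]] acting on H × H satisfies ‖L‖ ≤ √(1 + ‖A*A + B*B‖). -/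
/-!
Since `‖A x‖² + ‖B x‖² = re ⟪(A*A + B*B) x, x⟫ ≤ c ‖x‖²` with `c = ‖A*A + B*B‖`, it suffices to
show `‖A x‖² + ‖B x + y‖² ≤ (1 + c)(‖x‖² + ‖y‖²)`. Expanding `‖B x + y‖²`, the only term not
controlled directly is the cross term `2 ‖B x‖ ‖y‖ ≤ 2 √c ‖x‖ ‖y‖ ≤ ‖x‖² + c ‖y‖²`.
-/

open ContinuousLinearMap

namespace ContinuousLinearMap

variable {𝕜 E F G : Type*} [RCLike 𝕜]
  [NormedAddCommGroup E] [InnerProductSpace 𝕜 E] [CompleteSpace E]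
  [NormedAddCommGroup F] [InnerProductSpace 𝕜 F] [CompleteSpace F]
  [NormedAddCommGroup G] [InnerProductSpace 𝕜 G] [CompleteSpace G]

theorem norm_sq_add_norm_sq_le_norm_adjoint_comp_add (A : E →L[𝕜] F) (B : E →L[𝕜] G) (x : E) :
    ‖A x‖ ^ 2 + ‖B x‖ ^ 2 ≤ ‖adjoint A ∘L A + adjoint B ∘L B‖ * ‖x‖ ^ 2 :=
  calc ‖A x‖ ^ 2 + ‖B x‖ ^ 2 = RCLike.re (inner 𝕜 ((adjoint A ∘L A + adjoint B ∘L B) x) x) := by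
        rw [add_apply, inner_add_left, map_add, apply_norm_sq_eq_inner_adjoint_left,
          apply_norm_sq_eq_inner_adjoint_left]
    _ ≤ ‖(adjoint A ∘L A + adjoint B ∘L B) x‖ * ‖x‖ := re_inner_le_norm _ _
    _ ≤ ‖adjoint A ∘L A + adjoint B ∘L B‖ * ‖x‖ * ‖x‖ := by gcongr; exact le_opNorm _ _
    _ = ‖adjoint A ∘L A + adjoint B ∘L B‖ * ‖x‖ ^ 2 := by ring

end ContinuousLinearMap

theorem ContinuousLinearMap.opNorm_le_sqrt_of_norm_sq_le {𝕜 E F : Type*}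
    [NontriviallyNormedField 𝕜] [SeminormedAddCommGroup E] [NormedSpace 𝕜 E]
    [SeminormedAddCommGroup F] [NormedSpace 𝕜 F]
    (f : E →L[𝕜] F) {k : ℝ} (hk : 0 ≤ k) (h : ∀ z, ‖f z‖ ^ 2 ≤ k * ‖z‖ ^ 2) : ‖f‖ ≤ √k := by
  refine opNorm_le_bound f (Real.sqrt_nonneg k) fun z => ?_
  rw [← Real.sqrt_sq (norm_nonneg z), ← Real.sqrt_mul hk]
  exact (Real.le_sqrt (norm_nonneg _) (by positivity)).mpr (h z)

-- Multiplying the cross-term estimate by `c` gives `c (x² + c y² - 2 b y) ≥ (b - c y)²`.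
theorem sq_add_add_sq_le_one_add_mul {a b x y c : ℝ} (hc : 0 ≤ c) (h : a ^ 2 + b ^ 2 ≤ c * x ^ 2) :
    a ^ 2 + (b + y) ^ 2 ≤ (1 + c) * (x ^ 2 + y ^ 2) := by
  have cross : 2 * b * y ≤ x ^ 2 + c * y ^ 2 := by
    rcases hc.eq_or_lt with rfl | hc
    · nlinarith [sq_nonneg a, sq_nonneg b, sq_nonneg x]
    · refine le_of_mul_le_mul_left ?_ hc
      nlinarith [sq_nonneg a, sq_nonneg (b - c * y)]
  nlinarith

/-- For bounded operators `A, B` on a complex Hilbert space `H`, the block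
operator `L = [[A, 0], [B, I]]` on the Hilbert direct sum `H ⊕ H` satisfies
`‖L‖ ≤ √(1 + ‖A*A + B*B‖)`. -/
theorem block_norm_sqrt_bound {H : Type*}
    [NormedAddCommGroup H] [InnerProductSpace ℂ H] [CompleteSpace H]
    (A B : H →L[ℂ] H)
    (L : WithLp 2 (H × H) →L[ℂ] WithLp 2 (H × H))
    (hL : ∀ x y : H,
      L ((WithLp.equiv 2 (H × H)).symm (x, y)) =
        (WithLp.equiv 2 (H × H)).symm (A x, B x + y)) :
    ‖L‖ ≤ Real.sqrt (1 + ‖adjoint A ∘L A + adjoint B ∘L B‖) := by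
  refine L.opNorm_le_sqrt_of_norm_sq_le (by positivity) fun z => ?_
  have hLz : ‖L z‖ ^ 2 = ‖A z.fst‖ ^ 2 + ‖B z.fst + z.snd‖ ^ 2 := by
    rw [WithLp.prod_norm_sq_eq_of_L2,
      show z = (WithLp.equiv 2 (H × H)).symm (z.fst, z.snd) from rfl, hL]
    rfl
  have triangle : ‖B z.fst + z.snd‖ ^ 2 ≤ (‖B z.fst‖ + ‖z.snd‖) ^ 2 := by
    gcongr; exact norm_add_le _ _
  rw [hLz, WithLp.prod_norm_sq_eq_of_L2 z]
  exact (add_le_add le_rfl triangle).trans <| sq_add_add_sq_le_one_add_mul (norm_nonneg _)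
    (norm_sq_add_norm_sq_le_norm_adjoint_comp_add A B z.fst)
end

section
/- If d = 2k (the critically damped case), then for every real t, exp(tA) = e^{−dt/2} · [[1 + dt/2, dt/2], [−dt/2, 1 − dt/2]]. -/
/-!
For `d = 2k` the matrix `A` is `-(d/2) • 1 + (d/2) • N` with `N = !![1, 1; -1, -1]`, and `N ^ 2 = 0`.
The scalar part commutes with everything, so `exp (t • A) = e^{-dt/2} • exp ((dt/2) • N)`, and the
exponential series of the square-zero matrix `(dt/2) • N` stops after `1 + (dt/2) • N`.
-/

open NormedSpace Finset

namespace NormedSpace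

variable {𝔸 : Type*} [Ring 𝔸] [Algebra ℚ 𝔸] [TopologicalSpace 𝔸] [IsTopologicalRing 𝔸]

theorem exp_eq_isNilpotentExp {x : 𝔸} (hx : IsNilpotent x) : exp x = IsNilpotent.exp x := by
  obtain ⟨n, hn⟩ := hx
  rw [exp_eq_tsum_rat, IsNilpotent.exp_eq_sum hn]
  refine tsum_eq_sum fun i hi => ?_
  rw [pow_eq_zero_of_le (by simpa using hi) hn, smul_zero]

theorem exp_eq_one_add_of_sq_eq_zero {x : 𝔸} (hx : x ^ 2 = 0) : exp x = 1 + x := by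
  rw [exp_eq_isNilpotentExp ⟨2, hx⟩, IsNilpotent.exp_eq_sum hx]
  simp [sum_range_succ]

end NormedSpace

theorem Matrix.exp_smul_one_add {m 𝕂 : Type*} [Fintype m] [DecidableEq m] [RCLike 𝕂]
    (c : 𝕂) (N : Matrix m m 𝕂) : exp (c • 1 + N) = exp c • exp N := by
  rw [Matrix.exp_add_of_commute _ _ ((Commute.one_left N).smul_left c),
    ← Algebra.algebraMap_eq_smul_one, Algebra.smul_def]
  congr 1
  open scoped Matrix.Norms.Operator in exact (algebraMap_exp_comm c).symm

theorem exp_critically_damped_general (k d : ℝ)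
    (h : d = 2 * k) :
    ∀ t : ℝ,
      NormedSpace.exp (t • !![0, k; -k, -d]) =
        Real.exp (-d * t / 2) •
          !![1 + d * t / 2, d * t / 2;
             -(d * t / 2), 1 - d * t / 2] := by
  intro t
  obtain rfl : k = d / 2 := by linarith
  set N : Matrix (Fin 2) (Fin 2) ℝ := (d * t / 2) • !![1, 1; -1, -1]
  have hsplit : t • !![0, d / 2; -(d / 2), -d] = (-d * t / 2) • 1 + N := by
    ext i j; fin_cases i <;> fin_cases j <;> simp [N] <;> ring
  have hN : N ^ 2 = 0 := by
    ext i j; fin_cases i <;> fin_cases j <;> simp [N, sq, Matrix.mul_apply]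
  rw [hsplit, Matrix.exp_smul_one_add, exp_eq_one_add_of_sq_eq_zero hN, ← Real.exp_eq_exp_ℝ]
  congr 1
  ext i j; fin_cases i <;> fin_cases j <;> simp [N]; ring

/-- The critically damped case `d = 2k`: explicit formula for `exp(tA)` with
`A = [[0, k], [−k, −d]]`. -/
theorem exp_critically_damped (k d : ℝ) (hk : 0 < k) (hd : 0 < d)
    (h : d = 2 * k) :
    ∀ t : ℝ,
      NormedSpace.exp (t • !![0, k; -k, -d]) =
        Real.exp (-d * t / 2) •
          !![1 + d * t / 2, d * t / 2;
             -(d * t / 2), 1 - d * t / 2] :=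
  exp_critically_damped_general k d h
end

section
/- Define γ = −d/2 if d ≤ 2k and γ = (−d + √(d² − 4k²))/2 if d > 2k, and define γ_b = max{−k²/(d + 2k), −d/2}. Then: (a) γ equals the maximum of the real parts of the (complex) eigenvalues of A = [[0, k], [−k, −d]]; (b) γ_b = γ if d ≤ (√3 − 1)·k, and γ_b > γ if d > (√3 − 1)·k. -/
lemma spec_mem (k d : ℝ) (lam : ℂ) :
    lam ∈ spectrum ℂ ((!![0, k; -k, -d]).map (Complex.ofReal ·)) ↔
      lam ^ 2 + d * lam + k ^ 2 = 0 := by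
  rw [spectrum.mem_iff, Matrix.isUnit_iff_isUnit_det, isUnit_iff_ne_zero, not_not,
    Matrix.det_fin_two]
  simp [Matrix.algebraMap_matrix_apply, Matrix.map_apply]
  constructor <;> intro h <;> linear_combination h

lemma quad_factor (b c e lam : ℂ) (he : e ^ 2 = b ^ 2 / 4 - c) :
    lam ^ 2 + b * lam + c = (lam - (-b / 2 + e)) * (lam - (-b / 2 - e)) := by
  linear_combination he

set_option maxHeartbeats 800000 in
/-- For the 2×2 system matrix `A = [[0, k], [−k, −d]]`: (a) the spectral-shift
bound `γ` is the maximum of the real parts of the eigenvalues of `A`;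
(b) the Bátkai–Engel bound `γ_b` equals `γ` iff `d ≤ (√3 − 1)k`, and is
strictly larger for `d > (√3 − 1)k`. -/
theorem gamma_2x2_comparison (k d : ℝ) (hk : 0 < k) (hd : 0 < d)
    (γ γb : ℝ)
    (hγ : γ = if d ≤ 2 * k then -d / 2 else (-d + Real.sqrt (d ^ 2 - 4 * k ^ 2)) / 2)
    (hγb : γb = max (-(k ^ 2) / (d + 2 * k)) (-d / 2)) :
    IsGreatest
      {r : ℝ | ∃ lam ∈ spectrum ℂ ((!![0, k; -k, -d]).map (Complex.ofReal ·)),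
        lam.re = r} γ ∧
    (d ≤ (Real.sqrt 3 - 1) * k → γb = γ) ∧
    ((Real.sqrt 3 - 1) * k < d → γ < γb) := by
  -- the unified square root
  set e : ℂ := if d ≤ 2 * k then (Real.sqrt (4 * k ^ 2 - d ^ 2) / 2 : ℝ) * Complex.I
    else ((Real.sqrt (d ^ 2 - 4 * k ^ 2) / 2 : ℝ) : ℂ) with hedef
  have he : e ^ 2 = (d : ℂ) ^ 2 / 4 - (k : ℂ) ^ 2 := by
    by_cases hc : d ≤ 2 * k
    · have h1 : (0:ℝ) ≤ 4 * k ^ 2 - d ^ 2 := by nlinarith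
      have h2 : Real.sqrt (4 * k ^ 2 - d ^ 2) ^ 2 = 4 * k ^ 2 - d ^ 2 := Real.sq_sqrt h1
      rw [hedef, if_pos hc]
      have : ((Real.sqrt (4 * k ^ 2 - d ^ 2) / 2 : ℝ) : ℂ) ^ 2
          = ((4 * k ^ 2 - d ^ 2 : ℝ) : ℂ) / 4 := by
        rw [← Complex.ofReal_pow]; rw [div_pow, h2]; push_cast; ring
      rw [mul_pow, this, Complex.I_sq]
      push_cast; ring
    · have h1 : (0:ℝ) ≤ d ^ 2 - 4 * k ^ 2 := by nlinarith
      have h2 : Real.sqrt (d ^ 2 - 4 * k ^ 2) ^ 2 = d ^ 2 - 4 * k ^ 2 := Real.sq_sqrt h1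
      rw [hedef, if_neg hc, ← Complex.ofReal_pow, div_pow, h2]
      push_cast; ring
  have here : e.re = if d ≤ 2 * k then 0 else Real.sqrt (d ^ 2 - 4 * k ^ 2) / 2 := by
    by_cases hc : d ≤ 2 * k
    · rw [hedef, if_pos hc, if_pos hc]; simp
    · rw [hedef, if_neg hc, if_neg hc]; simp
  have here0 : 0 ≤ e.re := by
    rw [here]; split
    · exact le_rfl
    · positivity
  have hγe : γ = -d / 2 + e.re := by
    rw [hγ, here]; split <;> ring
  -- roots
  have hroot : ∀ lam : ℂ, (lam ∈ spectrum ℂ ((!![0, k; -k, -d]).map (Complex.ofReal ·))) ↔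
      (lam = -(d:ℂ) / 2 + e ∨ lam = -(d:ℂ) / 2 - e) := by
    intro lam
    rw [spec_mem, quad_factor (d:ℂ) ((k:ℂ)^2) e lam (by rw [he]), mul_eq_zero,
      sub_eq_zero, sub_eq_zero]
  have hre1 : (-(d:ℂ) / 2 + e).re = -d / 2 + e.re := by
    simp [Complex.add_re, Complex.div_re]
  have hre2 : (-(d:ℂ) / 2 - e).re = -d / 2 - e.re := by
    simp [Complex.sub_re, Complex.div_re]
  refine ⟨⟨⟨-(d:ℂ) / 2 + e, (hroot _).mpr (Or.inl rfl), by rw [hre1, hγe]⟩, ?_⟩, ?_, ?_⟩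
  · rintro r ⟨lam, hmem, rfl⟩
    rcases (hroot lam).mp hmem with h | h <;> rw [h, hγe]
    · rw [hre1]
    · rw [hre2]; linarith
  -- part (b) equality
  · intro hle
    have h3 : Real.sqrt 3 ^ 2 = 3 := Real.sq_sqrt (by norm_num)
    have h3le : Real.sqrt 3 ≤ 3 := by nlinarith [Real.sqrt_nonneg 3]
    have hd2k : d ≤ 2 * k := by nlinarith
    have hkey : (d + k) ^ 2 ≤ 3 * k ^ 2 := by nlinarith
    have : -(k ^ 2) / (d + 2 * k) ≤ -d / 2 := by
      rw [div_le_div_iff₀ (by positivity) (by norm_num)]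
      nlinarith
    rw [hγb, hγ, if_pos hd2k, max_eq_right this]
  -- part (b) strict
  · intro hlt
    have h3 : Real.sqrt 3 ^ 2 = 3 := Real.sq_sqrt (by norm_num)
    have h3pos : 0 < Real.sqrt 3 := Real.sqrt_pos.mpr (by norm_num)
    have hkey : 3 * k ^ 2 < (d + k) ^ 2 := by
      nlinarith [mul_pos (show (0:ℝ) < d + k - Real.sqrt 3 * k by nlinarith)
        (show (0:ℝ) < d + k + Real.sqrt 3 * k by nlinarith)]
    have hb : -(k ^ 2) / (d + 2 * k) ≤ γb := hγb ▸ le_max_left _ _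
    by_cases hc : d ≤ 2 * k
    · have : γ < -(k ^ 2) / (d + 2 * k) := by
        rw [hγ, if_pos hc, div_lt_div_iff₀ (by norm_num) (by positivity)]
        nlinarith
      linarith
    · push_neg at hc
      set s := Real.sqrt (d ^ 2 - 4 * k ^ 2) with hs
      have hs0 : 0 ≤ s := Real.sqrt_nonneg _
      have hs2 : s ^ 2 = d ^ 2 - 4 * k ^ 2 := Real.sq_sqrt (by nlinarith)
      have hsd : s < d := by nlinarith
      have : γ < -(k ^ 2) / (d + 2 * k) := by
        rw [hγ, if_neg (not_le.mpr hc), div_lt_div_iff₀ (by norm_num) (by positivity)]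
        have key : (d - s) * (d + 2 * k) * (d + s) = 4 * k ^ 2 * (d + 2 * k) := by
          linear_combination -(d + 2 * k) * hs2
        have h2 : 2 * k ^ 2 * (d + s) < (d - s) * (d + 2 * k) * (d + s) := by
          have hpos : 0 < 2 * k ^ 2 * (d + 4 * k - s) :=
            mul_pos (by positivity) (by linarith)
          linarith [key, hpos]
        have hX : 2 * k ^ 2 < (d - s) * (d + 2 * k) :=
          lt_of_mul_lt_mul_right h2 (by linarith)
        linarith [hX]
      linarith
end
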